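/- Assume (H0), let f : ℝ₊ → ℝ₊ and g : ℝ₊ → ℝ₊ be continuous, β > 0, and let φ : ℝ → ℝ₊ be a bounded, twice continuously differentiable solution of the profile equation φ''(t) − c·φ'(t) − f(φ(t)) + ∫₀^∞∫_ℝ K(s,w)·g(φ(t − cs − w)) dw ds = 0 for all t ∈ ℝ. Then, with (𝒢φ)(t) := ∫₀^∞∫_ℝ K(s,w)·g(φ(t − cs − w)) dw ds + β·φ(t) − f(φ(t)), for every t ∈ ℝ one has φ(t) = σ(c)⁻¹·(∫_{−∞}^t e^{ν(c)(t−s)}·(𝒢φ)(s) ds + ∫_t^{+∞} e^{μ(c)(t−s)}·(𝒢φ)(s) ds) = ∫_ℝ k₁(t−s)·(𝒢φ)(s) ds. -/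

import Mathlib

open MeasureTheory Filter Set

noncomputable section

/-- positive root `μ(c)` of `z² - cz - β = 0`. -/
def muRoot (β c : ℝ) : ℝ := (c + Real.sqrt (c ^ 2 + 4 * β)) / 2

/-- negative root `ν(c)` of `z² - cz - β = 0`. -/
def nuRoot (β c : ℝ) : ℝ := (c - Real.sqrt (c ^ 2 + 4 * β)) / 2

/-- the Green's function kernel `k₁`. -/
def k1 (β c : ℝ) (s : ℝ) : ℝ :=
  if 0 ≤ s then Real.exp (nuRoot β c * s) / Real.sqrt (c ^ 2 + 4 * β)
  else Real.exp (muRoot β c * s) / Real.sqrt (c ^ 2 + 4 * β)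

/-- `(𝒢φ)(t) = ∫₀^∞∫_ℝ K(s,w) g(φ(t-cs-w)) dw ds + βφ(t) - f(φ(t))`. -/
def Gop (K : ℝ → ℝ → ℝ) (f g : ℝ → ℝ) (β c : ℝ) (φ : ℝ → ℝ) (t : ℝ) : ℝ :=
  (∫ s in Set.Ioi (0:ℝ), ∫ w : ℝ, K s w * g (φ (t - c * s - w))) + β * φ t - f (φ t)

/-!
Since `μ + ν = c` and `μν = -β`, along a solution `𝒢φ = βφ + cφ' - φ''` factors both as
`(d/ds - ν)(μφ - φ')` and as `(d/ds - μ)(νφ - φ')`. Hence `e^{ν(t-s)} (μφ(s) - φ'(s))` and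
`e^{μ(t-s)} (νφ(s) - φ'(s))` are primitives of the two integrands. Both vanish at the far end of
their half-line because `φ` and `φ'` are bounded, so the two integrals are `μφ(t) - φ'(t)` and
`φ'(t) - νφ(t)`, which add up to `σ(c) φ(t)`. `𝒢φ` is bounded because `K` has mass one and `f`, `g`
are bounded on the range of `φ`; this bounds `φ'' - cφ'` and hence `φ'`.
-/

open Real Topology

lemma abs_lt_sqrt_sq_add_four_mul {β : ℝ} (hβ : 0 < β) (c : ℝ) :
    |c| < √(c ^ 2 + 4 * β) := by
  rw [← Real.sqrt_sq_eq_abs]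
  exact Real.sqrt_lt_sqrt (sq_nonneg c) (by linarith)

lemma muRoot_add_nuRoot (β c : ℝ) : muRoot β c + nuRoot β c = c := by
  unfold muRoot nuRoot; ring

lemma muRoot_sub_nuRoot (β c : ℝ) : muRoot β c - nuRoot β c = √(c ^ 2 + 4 * β) := by
  unfold muRoot nuRoot; ring

lemma muRoot_mul_nuRoot {β : ℝ} (hβ : 0 ≤ β) (c : ℝ) :
    muRoot β c * nuRoot β c = -β := by
  unfold muRoot nuRoot
  linear_combination (-1 / 4 : ℝ) * Real.sq_sqrt (by positivity : 0 ≤ c ^ 2 + 4 * β)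

lemma nuRoot_neg {β : ℝ} (hβ : 0 < β) (c : ℝ) : nuRoot β c < 0 := by
  unfold nuRoot; linarith [le_abs_self c, abs_lt_sqrt_sq_add_four_mul hβ c]

lemma muRoot_pos {β : ℝ} (hβ : 0 < β) (c : ℝ) : 0 < muRoot β c := by
  unfold muRoot; linarith [neg_abs_le c, abs_lt_sqrt_sq_add_four_mul hβ c]

lemma tendsto_exp_mul_sub_atBot {a : ℝ} (ha : a < 0) (t : ℝ) :
    Tendsto (fun s => exp (a * (t - s))) atBot (𝓝 0) := by
  refine tendsto_exp_atBot.comp (Tendsto.const_mul_atTop_of_neg ha ?_)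
  exact (tendsto_atTop_add_const_left _ t tendsto_neg_atBot_atTop).congr fun s => by ring

lemma tendsto_exp_mul_sub_atTop {a : ℝ} (ha : 0 < a) (t : ℝ) :
    Tendsto (fun s => exp (a * (t - s))) atTop (𝓝 0) := by
  refine tendsto_exp_atBot.comp (Tendsto.const_mul_atBot ha ?_)
  exact (tendsto_atBot_add_const_left _ t tendsto_neg_atTop_atBot).congr fun s => by ring

lemma integrableOn_Iic_exp_mul_sub_mul {a : ℝ} (ha : a < 0) (t : ℝ) {w : ℝ → ℝ}
    (hw : Continuous w) {B : ℝ} (hB : ∀ s, |w s| ≤ B) :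
    IntegrableOn (fun s => exp (a * (t - s)) * w s) (Iic t) := by
  have hexp : IntegrableOn (fun s => exp (a * t) * exp (-a * s)) (Iic t) :=
    (integrableOn_exp_mul_Iic (neg_pos.2 ha) t).const_mul _
  replace hexp : IntegrableOn (fun s => exp (a * (t - s))) (Iic t) :=
    hexp.congr_fun (fun s _ => by dsimp only; rw [← exp_add]; ring_nf) measurableSet_Iic
  exact hexp.mul_bdd hw.aestronglyMeasurable (ae_of_all _ hB)

lemma integrableOn_Ioi_exp_mul_sub_mul {a : ℝ} (ha : 0 < a) (t : ℝ) {w : ℝ → ℝ}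
    (hw : Continuous w) {B : ℝ} (hB : ∀ s, |w s| ≤ B) :
    IntegrableOn (fun s => exp (a * (t - s)) * w s) (Ioi t) := by
  have hexp : IntegrableOn (fun s => exp (a * t) * exp (-a * s)) (Ioi t) :=
    (integrableOn_exp_mul_Ioi (neg_neg_of_pos ha) t).const_mul _
  replace hexp : IntegrableOn (fun s => exp (a * (t - s))) (Ioi t) :=
    hexp.congr_fun (fun s _ => by dsimp only; rw [← exp_add]; ring_nf) measurableSet_Ioi
  exact hexp.mul_bdd hw.aestronglyMeasurable (ae_of_all _ hB)

lemma hasDerivAt_exp_mul_sub_mul {a t : ℝ} {u : ℝ → ℝ} {u' s : ℝ}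
    (hu : HasDerivAt u u' s) :
    HasDerivAt (fun s => exp (a * (t - s)) * u s) (exp (a * (t - s)) * (u' - a * u s)) s := by
  refine (((((hasDerivAt_id s).const_sub t).const_mul a).exp).mul hu).congr_deriv ?_
  simp only [id]
  ring

lemma integral_Iic_exp_mul_sub_mul_eq {a : ℝ} (ha : a < 0) (t : ℝ) {u u' : ℝ → ℝ}
    (hu : ∀ s, HasDerivAt u (u' s) s) (hu' : Continuous u') {A B : ℝ} (hA : ∀ s, |u s| ≤ A)
    (hB : ∀ s, |u' s - a * u s| ≤ B) :
    ∫ s in Iic t, exp (a * (t - s)) * (u' s - a * u s) = u t := by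
  have hu_cont : Continuous u := continuous_iff_continuousAt.2 fun s => (hu s).continuousAt
  have hlim : Tendsto (fun s => exp (a * (t - s)) * u s) atBot (𝓝 0) :=
    (tendsto_exp_mul_sub_atBot ha t).zero_mul_isBoundedUnder_le (isBoundedUnder_of ⟨A, hA⟩)
  simpa using integral_Iic_of_hasDerivAt_of_tendsto'
    (fun s _ => hasDerivAt_exp_mul_sub_mul (hu s))
    (integrableOn_Iic_exp_mul_sub_mul ha t (hu'.sub (continuous_const.mul hu_cont)) hB) hlim

lemma integral_Ioi_exp_mul_sub_mul_eq {a : ℝ} (ha : 0 < a) (t : ℝ) {u u' : ℝ → ℝ}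
    (hu : ∀ s, HasDerivAt u (u' s) s) (hu' : Continuous u') {A B : ℝ} (hA : ∀ s, |u s| ≤ A)
    (hB : ∀ s, |u' s - a * u s| ≤ B) :
    ∫ s in Ioi t, exp (a * (t - s)) * (u' s - a * u s) = -u t := by
  have hu_cont : Continuous u := continuous_iff_continuousAt.2 fun s => (hu s).continuousAt
  have hlim : Tendsto (fun s => exp (a * (t - s)) * u s) atTop (𝓝 0) :=
    (tendsto_exp_mul_sub_atTop ha t).zero_mul_isBoundedUnder_le (isBoundedUnder_of ⟨A, hA⟩)
  simpa using integral_Ioi_of_hasDerivAt_of_tendsto'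
    (fun s _ => hasDerivAt_exp_mul_sub_mul (hu s))
    (integrableOn_Ioi_exp_mul_sub_mul ha t (hu'.sub (continuous_const.mul hu_cont)) hB) hlim

/-- `φ' - cφ` is `C`-Lipschitz, and by the mean value theorem `φ'` is at most `2M` somewhere
in `(t - 1, t)`. -/
lemma abs_deriv_le_of_abs_le {φ : ℝ → ℝ} (hφ : Differentiable ℝ φ)
    (hφ' : Differentiable ℝ (deriv φ)) {c M C : ℝ} (hM : ∀ t, |φ t| ≤ M)
    (hC : ∀ t, |deriv (deriv φ) t - c * deriv φ t| ≤ C) (t : ℝ) :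
    |deriv φ t| ≤ 2 * M + 2 * |c| * M + C := by
  obtain ⟨ξ, ⟨hξl, hξr⟩, hslope⟩ :=
    exists_deriv_eq_slope φ (sub_one_lt t) hφ.continuous.continuousOn hφ.differentiableOn
  have hφ_sub : ∀ x y, |φ x - φ y| ≤ 2 * M := fun x y =>
    (abs_sub _ _).trans (by linarith [hM x, hM y])
  set u := fun s => deriv φ s - c * φ s
  have hu : ∀ s, HasDerivAt u (deriv (deriv φ) s - c * deriv φ s) s := fun s =>
    (hφ' s).hasDerivAt.sub ((hφ s).hasDerivAt.const_mul c)
  have hu_lip : |u t - u ξ| ≤ C * |t - ξ| := by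
    simpa only [Real.norm_eq_abs] using convex_univ.norm_image_sub_le_of_norm_deriv_le
      (fun s _ => (hu s).differentiableAt) (fun s _ => (hu s).deriv ▸ hC s)
      (mem_univ ξ) (mem_univ t)
  have hu_sub : |u t - u ξ| ≤ C :=
    hu_lip.trans (mul_le_of_le_one_right ((abs_nonneg _).trans (hC t))
      (abs_le.2 ⟨by linarith, by linarith⟩))
  have hφ'ξ : |deriv φ ξ| ≤ 2 * M := by
    rw [hslope, sub_sub_cancel, div_one]
    exact hφ_sub _ _
  calc |deriv φ t| = |(u t - u ξ) + deriv φ ξ + c * (φ t - φ ξ)| := by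
        congr 1; simp only [u]; ring
    _ ≤ |u t - u ξ| + |deriv φ ξ| + |c| * |φ t - φ ξ| := by
        rw [← abs_mul]; exact abs_add_three _ _ _
    _ ≤ C + 2 * M + |c| * (2 * M) := by gcongr; exact hφ_sub _ _
    _ = 2 * M + 2 * |c| * M + C := by ring

section Solution

variable {β c : ℝ} {φ G : ℝ → ℝ}

lemma eq_deriv_sub_mul_of_vieta {a b : ℝ} (hab : a + b = c) (hab' : a * b = -β)
    (hG : ∀ t, G t = β * φ t + c * deriv φ t - deriv (deriv φ) t) (s : ℝ) :
    G s = (b * deriv φ s - deriv (deriv φ) s) - a * (b * φ s - deriv φ s) := by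
  rw [hG]; linear_combination φ s * hab' - deriv φ s * hab

lemma abs_mul_sub_deriv_le {M M' : ℝ} (hM : ∀ t, |φ t| ≤ M) (hM' : ∀ t, |deriv φ t| ≤ M')
    (b s : ℝ) : |b * φ s - deriv φ s| ≤ |b| * M + M' :=
  (abs_sub _ _).trans <| add_le_add
    (by rw [abs_mul]; exact mul_le_mul_of_nonneg_left (hM s) (abs_nonneg b)) (hM' s)

lemma abs_deriv_le_of_solution (hβ : 0 ≤ β) (hφ : ContDiff ℝ 2 φ)
    (hG : ∀ t, G t = β * φ t + c * deriv φ t - deriv (deriv φ) t) {M C : ℝ}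
    (hM : ∀ t, |φ t| ≤ M) (hC : ∀ t, |G t| ≤ C) (s : ℝ) :
    |deriv φ s| ≤ 2 * M + 2 * |c| * M + (β * M + C) := by
  refine abs_deriv_le_of_abs_le (hφ.differentiable two_ne_zero) hφ.differentiable_deriv_two hM
    (fun s => ?_) s
  have hβφ : |β * φ s| ≤ β * M := by
    rw [abs_mul, abs_of_nonneg hβ]; exact mul_le_mul_of_nonneg_left (hM s) hβ
  rw [show deriv (deriv φ) s - c * deriv φ s = β * φ s - G s by rw [hG]; ring]
  exact (abs_sub _ _).trans (add_le_add hβφ (hC s))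

lemma hasDerivAt_mul_sub_deriv (hφ : ContDiff ℝ 2 φ) (b s : ℝ) :
    HasDerivAt (fun s => b * φ s - deriv φ s) (b * deriv φ s - deriv (deriv φ) s) s :=
  ((hφ.differentiable two_ne_zero s).hasDerivAt.const_mul b).sub
    (hφ.differentiable_deriv_two s).hasDerivAt

lemma continuous_mul_deriv_sub_deriv_deriv (hφ : ContDiff ℝ 2 φ) (b : ℝ) :
    Continuous fun s => b * deriv φ s - deriv (deriv φ) s :=
  (continuous_const.mul (hφ.continuous_deriv (by norm_num))).sub hφ.deriv'.continuous_deriv_one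

lemma integral_Iic_exp_mul_eq_of_vieta {a b : ℝ} (ha : a < 0) (hab : a + b = c)
    (hab' : a * b = -β) (hφ : ContDiff ℝ 2 φ)
    (hG : ∀ t, G t = β * φ t + c * deriv φ t - deriv (deriv φ) t) {M M' C : ℝ}
    (hM : ∀ t, |φ t| ≤ M) (hM' : ∀ t, |deriv φ t| ≤ M') (hC : ∀ t, |G t| ≤ C) (t : ℝ) :
    ∫ s in Iic t, exp (a * (t - s)) * G s = b * φ t - deriv φ t := by
  have hGab := eq_deriv_sub_mul_of_vieta hab hab' hG
  simp_rw [hGab]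
  exact integral_Iic_exp_mul_sub_mul_eq ha t
    (hasDerivAt_mul_sub_deriv hφ b) (continuous_mul_deriv_sub_deriv_deriv hφ b)
    (abs_mul_sub_deriv_le hM hM' b) fun s => hGab s ▸ hC s

lemma integral_Ioi_exp_mul_eq_of_vieta {a b : ℝ} (ha : 0 < a) (hab : a + b = c)
    (hab' : a * b = -β) (hφ : ContDiff ℝ 2 φ)
    (hG : ∀ t, G t = β * φ t + c * deriv φ t - deriv (deriv φ) t) {M M' C : ℝ}
    (hM : ∀ t, |φ t| ≤ M) (hM' : ∀ t, |deriv φ t| ≤ M') (hC : ∀ t, |G t| ≤ C) (t : ℝ) :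
    ∫ s in Ioi t, exp (a * (t - s)) * G s = deriv φ t - b * φ t := by
  have hGab := eq_deriv_sub_mul_of_vieta hab hab' hG
  simp_rw [hGab]
  rw [integral_Ioi_exp_mul_sub_mul_eq ha t
    (hasDerivAt_mul_sub_deriv hφ b) (continuous_mul_deriv_sub_deriv_deriv hφ b)
    (abs_mul_sub_deriv_le hM hM' b) fun s => hGab s ▸ hC s, neg_sub]

lemma integral_k1_mul {t : ℝ}
    (hν : IntegrableOn (fun s => exp (nuRoot β c * (t - s)) * G s) (Iic t))
    (hμ : IntegrableOn (fun s => exp (muRoot β c * (t - s)) * G s) (Ioi t)) :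
    ∫ s, k1 β c (t - s) * G s = (√(c ^ 2 + 4 * β))⁻¹ *
      ((∫ s in Iic t, exp (nuRoot β c * (t - s)) * G s) +
        ∫ s in Ioi t, exp (muRoot β c * (t - s)) * G s) := by
  have hIic : EqOn (fun s => k1 β c (t - s) * G s)
      (fun s => (√(c ^ 2 + 4 * β))⁻¹ * (exp (nuRoot β c * (t - s)) * G s)) (Iic t) :=
    fun s hs => by simp only [k1, if_pos (sub_nonneg.2 (mem_Iic.1 hs))]; ring
  have hIoi : EqOn (fun s => k1 β c (t - s) * G s)
      (fun s => (√(c ^ 2 + 4 * β))⁻¹ * (exp (muRoot β c * (t - s)) * G s)) (Ioi t) :=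
    fun s hs => by simp only [k1, if_neg (not_le.2 (sub_neg.2 (mem_Ioi.1 hs)))]; ring
  rw [← intervalIntegral.integral_Iic_add_Ioi
      (IntegrableOn.congr_fun (hν.const_mul _) hIic.symm measurableSet_Iic)
      (IntegrableOn.congr_fun (hμ.const_mul _) hIoi.symm measurableSet_Ioi),
    setIntegral_congr_fun measurableSet_Iic hIic, setIntegral_congr_fun measurableSet_Ioi hIoi,
    integral_const_mul, integral_const_mul, mul_add]

theorem integral_representation_of_bounded (hβ : 0 < β) (hφ : ContDiff ℝ 2 φ)
    (hG : ∀ t, G t = β * φ t + c * deriv φ t - deriv (deriv φ) t) {M C : ℝ}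
    (hM : ∀ t, |φ t| ≤ M) (hC : ∀ t, |G t| ≤ C) (t : ℝ) :
      φ t = (√(c ^ 2 + 4 * β))⁻¹ *
        ((∫ s in Iic t, exp (nuRoot β c * (t - s)) * G s) +
          ∫ s in Ioi t, exp (muRoot β c * (t - s)) * G s) ∧
      φ t = ∫ s : ℝ, k1 β c (t - s) * G s := by
  have hν := nuRoot_neg hβ c
  have hμ := muRoot_pos hβ c
  have hsum := muRoot_add_nuRoot β c
  have hprod := muRoot_mul_nuRoot hβ.le c
  have hφ' := abs_deriv_le_of_solution hβ.le hφ hG hM hC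
  have hG_cont : Continuous G :=
    (show Continuous fun s => β * φ s + (c * deriv φ s - deriv (deriv φ) s) from
      (continuous_const.mul hφ.continuous).add (continuous_mul_deriv_sub_deriv_deriv hφ c)).congr
      fun s => by rw [hG]; ring
  have hrepr : φ t = (√(c ^ 2 + 4 * β))⁻¹ *
      ((∫ s in Iic t, exp (nuRoot β c * (t - s)) * G s) +
        ∫ s in Ioi t, exp (muRoot β c * (t - s)) * G s) := by
    rw [integral_Iic_exp_mul_eq_of_vieta hν ((add_comm _ _).trans hsum)
        ((mul_comm _ _).trans hprod) hφ hG hM hφ' hC t,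
      integral_Ioi_exp_mul_eq_of_vieta hμ hsum hprod hφ hG hM hφ' hC t, ← muRoot_sub_nuRoot]
    field_simp [(sub_pos.2 (hν.trans hμ)).ne']
    ring
  refine ⟨hrepr, ?_⟩
  rwa [integral_k1_mul (integrableOn_Iic_exp_mul_sub_mul hν t hG_cont hC)
    (integrableOn_Ioi_exp_mul_sub_mul hμ t hG_cont hC)]

end Solution

lemma abs_integral_integral_mul_le {X Y : Type*} [MeasurableSpace X] [MeasurableSpace Y]
    {μ : Measure X} {ν : Measure Y} [SFinite μ] [SFinite ν] {K h : X → Y → ℝ}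
    (hK : Integrable (Function.uncurry K) (μ.prod ν)) (hKnn : ∀ x y, 0 ≤ K x y) {C : ℝ}
    (hh : ∀ x y, |h x y| ≤ C) :
    |∫ x, ∫ y, K x y * h x y ∂ν ∂μ| ≤ C * ∫ x, ∫ y, K x y ∂ν ∂μ := by
  rw [← Real.norm_eq_abs, ← integral_const_mul]
  refine norm_integral_le_of_norm_le (hK.integral_prod_left.const_mul C) ?_
  filter_upwards [hK.prod_right_ae] with x hx
  rw [← integral_const_mul]
  refine norm_integral_le_of_norm_le (hx.const_mul C) (ae_of_all _ fun y => ?_)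
  rw [norm_mul, Real.norm_of_nonneg (hKnn x y), mul_comm]
  exact mul_le_mul_of_nonneg_right (hh x y) (hKnn x y)

theorem integral_representation_general
    (K : ℝ → ℝ → ℝ) (f g : ℝ → ℝ) (β c : ℝ) (φ : ℝ → ℝ)
    (hβ : 0 < β)
    -- (H0)
    (hKnn : ∀ s w, 0 ≤ K s w)
    (hKint : IntegrableOn (fun x : ℝ × ℝ => K x.1 x.2) (Set.Ioi 0 ×ˢ Set.univ))
    (hKnorm : (∫ s in Set.Ioi (0:ℝ), ∫ w : ℝ, K s w) = 1)
    -- f, g continuous and nonnegative on ℝ₊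
    (hgc : ContinuousOn g (Set.Ici 0))
    (hfc : ContinuousOn f (Set.Ici 0))
    -- φ is a bounded nonnegative C² solution of the profile equation
    (hφC2 : ContDiff ℝ 2 φ)
    (hφnn : ∀ t, 0 ≤ φ t)
    (hφbdd : ∃ M, ∀ t, |φ t| ≤ M)
    (hφsol : ∀ t : ℝ, deriv (deriv φ) t - c * deriv φ t - f (φ t)
      + (∫ s in Set.Ioi (0:ℝ), ∫ w : ℝ, K s w * g (φ (t - c * s - w))) = 0) :
    ∀ t : ℝ,
      φ t = (Real.sqrt (c ^ 2 + 4 * β))⁻¹ *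
        ((∫ s in Set.Iic t, Real.exp (nuRoot β c * (t - s)) * Gop K f g β c φ s) +
          ∫ s in Set.Ioi t, Real.exp (muRoot β c * (t - s)) * Gop K f g β c φ s) ∧
      φ t = ∫ s : ℝ, k1 β c (t - s) * Gop K f g β c φ s := by
  obtain ⟨M, hM⟩ := hφbdd
  have hφM : ∀ t, φ t ∈ Icc 0 M := fun t => ⟨hφnn t, (abs_le.1 (hM t)).2⟩
  obtain ⟨Mg, hMg⟩ := isCompact_Icc.exists_bound_of_continuousOn (hgc.mono Icc_subset_Ici_self)
  obtain ⟨Mf, hMf⟩ := isCompact_Icc.exists_bound_of_continuousOn (hfc.mono Icc_subset_Ici_self)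
  have hK : Integrable (Function.uncurry K) ((volume.restrict (Ioi 0)).prod volume) := by
    rwa [Measure.restrict_prod_eq_prod_univ, ← Measure.volume_eq_prod]
  have hGop : ∀ t, |Gop K f g β c φ t| ≤ Mg + β * M + Mf := fun t => by
    have hI := abs_integral_integral_mul_le hK hKnn
      (h := fun s w => g (φ (t - c * s - w))) fun s w => hMg _ (hφM _)
    rw [hKnorm, mul_one] at hI
    have hβφ : |β * φ t| ≤ β * M := by
      rw [abs_mul, abs_of_pos hβ]; exact mul_le_mul_of_nonneg_left (hM t) hβ.le
    exact (abs_sub _ _).trans (add_le_add ((abs_add_le _ _).trans (add_le_add hI hβφ))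
      (hMf _ (hφM t)))
  exact integral_representation_of_bounded hβ hφC2
    (fun t => by unfold Gop; linarith [hφsol t]) hM hGop

/-- Integral representation of bounded solutions of the profile equation. -/
theorem integral_representation
    (K : ℝ → ℝ → ℝ) (f g : ℝ → ℝ) (β c : ℝ) (φ : ℝ → ℝ)
    (hβ : 0 < β)
    -- (H0)
    (hKmeas : Measurable fun x : ℝ × ℝ => K x.1 x.2)
    (hKnn : ∀ s w, 0 ≤ K s w)
    (hKint : IntegrableOn (fun x : ℝ × ℝ => K x.1 x.2) (Set.Ioi 0 ×ˢ Set.univ))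
    (hKnorm : (∫ s in Set.Ioi (0:ℝ), ∫ w : ℝ, K s w) = 1)
    -- f, g continuous and nonnegative on ℝ₊
    (hgc : ContinuousOn g (Set.Ici 0))
    (hgnn : ∀ s, 0 ≤ s → 0 ≤ g s)
    (hfc : ContinuousOn f (Set.Ici 0))
    (hfnn : ∀ s, 0 ≤ s → 0 ≤ f s)
    -- φ is a bounded nonnegative C² solution of the profile equation
    (hφC2 : ContDiff ℝ 2 φ)
    (hφnn : ∀ t, 0 ≤ φ t)
    (hφbdd : ∃ M, ∀ t, |φ t| ≤ M)
    (hφsol : ∀ t : ℝ, deriv (deriv φ) t - c * deriv φ t - f (φ t)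
      + (∫ s in Set.Ioi (0:ℝ), ∫ w : ℝ, K s w * g (φ (t - c * s - w))) = 0) :
    ∀ t : ℝ,
      φ t = (Real.sqrt (c ^ 2 + 4 * β))⁻¹ *
        ((∫ s in Set.Iic t, Real.exp (nuRoot β c * (t - s)) * Gop K f g β c φ s) +
          ∫ s in Set.Ioi t, Real.exp (muRoot β c * (t - s)) * Gop K f g β c φ s) ∧
      φ t = ∫ s : ℝ, k1 β c (t - s) * Gop K f g β c φ s :=
  integral_representation_general K f g β c φ hβ hKnn hKint hKnorm hgc hfc hφC2 hφnn hφbdd hφsol
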